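/- arXiv:2208.01510 — 2 statements merged into one kernel-verified Lean document; each statement's English description precedes it below -/
import Mathlib

section
/- Let X̂ be a finite nonempty set containing x̂, let D satisfy D(x̂,x̂) = 0 and D(x̂,ẑ) > 0 for ẑ ∈ X̂, ẑ ≠ x̂, and let π^σ(ẑ) = exp(−D(x̂,ẑ)²/σ²). Fix any functions f̃ : X̂ → ℝ and g : X̂ → ℝ. Then as σ → 0⁺, the LIME weighted loss L^σ = ∑_{ẑ∈X̂} π^σ(ẑ)·(f̃(ẑ) − g(ẑ))² converges to (f̃(x̂) − g(x̂))². Consequently, any surrogate g with g(x̂) = f̃(x̂) — in particular the constant surrogate g ≡ f̃(x̂), which has all feature-attribution coefficients equal to zero — attains the minimum value 0 of the limiting loss. -/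
open Filter Topology

/-- As the bandwidth `σ` tends to `0⁺`, the LIME weighted loss
`L^σ = ∑_{ẑ∈X̂} π^σ(ẑ)·(f̃(ẑ) − g(ẑ))²` converges to `(f̃(x̂) − g(x̂))²`.
Consequently, any surrogate with `g(x̂) = f̃(x̂)` (in particular the constant
surrogate `g ≡ f̃(x̂)`) attains the minimum value `0` of the limiting loss. -/
theorem lime_loss_degenerates
    {S : Type*} (Xhat : Finset S) (hne : Xhat.Nonempty)
    (xhat : S) (hx : xhat ∈ Xhat)
    (D : S → S → ℝ)
    (hD0 : D xhat xhat = 0)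
    (hDpos : ∀ z ∈ Xhat, z ≠ xhat → 0 < D xhat z)
    (ftil g : S → ℝ) :
    Tendsto
      (fun σ : ℝ =>
        ∑ z ∈ Xhat, Real.exp (-(D xhat z) ^ 2 / σ ^ 2) * (ftil z - g z) ^ 2)
      (𝓝[>] 0) (𝓝 ((ftil xhat - g xhat) ^ 2))
    ∧ (g xhat = ftil xhat → (ftil xhat - g xhat) ^ 2 = 0)
    ∧ ∀ g' : S → ℝ, (0 : ℝ) ≤ (ftil xhat - g' xhat) ^ 2 := by
  classical
  refine ⟨?_, fun h => by rw [h]; ring, fun g' => sq_nonneg _⟩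
  have key : ((ftil xhat - g xhat) ^ 2)
      = ∑ z ∈ Xhat, (if z = xhat then (ftil z - g z) ^ 2 else 0) := by
    rw [Finset.sum_ite_eq' Xhat xhat (fun z => (ftil z - g z) ^ 2), if_pos hx]
  rw [key]
  apply tendsto_finset_sum
  intro z hz
  by_cases hzx : z = xhat
  · subst hzx
    simp only [if_pos rfl, hD0]
    have : ∀ σ : ℝ, Real.exp (-(0:ℝ) ^ 2 / σ ^ 2) * (ftil z - g z) ^ 2
        = (ftil z - g z) ^ 2 := by
      intro σ; norm_num
    simp only [this]
    exact tendsto_const_nhds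
  · simp only [if_neg hzx]
    have hD : 0 < D xhat z := hDpos z hz hzx
    have h1 : Tendsto (fun σ : ℝ => Real.exp (-(D xhat z) ^ 2 / σ ^ 2))
        (𝓝[>] 0) (𝓝 0) := by
      apply Real.tendsto_exp_atBot.comp
      have hsq : Tendsto (fun σ : ℝ => σ ^ 2) (𝓝[>] 0) (𝓝[>] 0) := by
        apply tendsto_nhdsWithin_of_tendsto_nhds_of_eventually_within
        · exact (continuous_pow 2).tendsto' 0 0 (by norm_num) |>.mono_left nhdsWithin_le_nhds
        · filter_upwards [self_mem_nhdsWithin] with σ (hσ : 0 < σ)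
          exact pow_pos hσ 2
      have hinv : Tendsto (fun σ : ℝ => (σ ^ 2)⁻¹) (𝓝[>] 0) atTop :=
        tendsto_inv_nhdsGT_zero.comp hsq
      have : Tendsto (fun σ : ℝ => (D xhat z) ^ 2 * (σ ^ 2)⁻¹) (𝓝[>] 0) atTop :=
        hinv.const_mul_atTop (pow_pos hD 2)
      have h2 : Tendsto (fun σ : ℝ => -((D xhat z) ^ 2 * (σ ^ 2)⁻¹)) (𝓝[>] 0) atBot :=
        tendsto_neg_atTop_atBot.comp this
      refine h2.congr fun σ => ?_
      field_simp
    simpa using h1.mul_const ((ftil z - g z) ^ 2)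
end

section
/- Let d ≥ 1 and let F : ℝ^d → ℝ be Lipschitz continuous and differentiable at a point x ∈ ℝ^d. For σ > 0 let μ_σ denote the centered isotropic Gaussian probability measure on ℝ^d with covariance σ²·I. Then for every coordinate i ∈ {1,…,d}, (1/σ²)·∫ zᵢ·F(x+z) dμ_σ(z) converges to the partial derivative ∂F/∂xᵢ(x) as σ → 0⁺. -/
/-!
Substituting `z = σ • w` turns the Gaussian ratio into `∫ wᵢ · (F (x + σ • w) - F x) / σ` against
the standard Gaussian `γ`; the term `F x` may be subtracted because `γ` is centred. The Lipschitz
bound `|F (x + σ • w) - F x| ≤ K |σ| ‖w‖` dominates the integrand by `K ‖w‖²`, so dominated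
convergence gives the limit `∫ wᵢ · DF(x) w dγ = Σⱼ ∂ⱼF(x) ∫ wᵢ wⱼ dγ = ∂ᵢF(x)`, the coordinates
of `γ` being independent, centred and of unit variance.
-/

open MeasureTheory ProbabilityTheory Filter Topology
open scoped NNReal

section DifferenceQuotient

variable {E : Type*} [NormedAddCommGroup E] [NormedSpace ℝ E] {F : E → ℝ} {K : ℝ≥0}

lemma LipschitzWith.norm_clm_mul_sub_le (hF : LipschitzWith K F) (ℓ : E →L[ℝ] ℝ)
    (x w : E) (σ : ℝ) :
    ‖ℓ w * (F (x + σ • w) - F x)‖ ≤ ‖ℓ‖ * K * |σ| * ‖w‖ ^ 2 := by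
  have hF' : |F (x + σ • w) - F x| ≤ K * (|σ| * ‖w‖) := by
    simpa [Real.dist_eq, dist_eq_norm, norm_smul] using hF.dist_le_mul (x + σ • w) x
  calc ‖ℓ w * (F (x + σ • w) - F x)‖ = ‖ℓ w‖ * |F (x + σ • w) - F x| := by
        rw [norm_mul, Real.norm_eq_abs (F _ - _)]
    _ ≤ (‖ℓ‖ * ‖w‖) * (K * (|σ| * ‖w‖)) := by gcongr; exact ℓ.le_opNorm w
    _ = ‖ℓ‖ * K * |σ| * ‖w‖ ^ 2 := by ring

variable [MeasurableSpace E] [BorelSpace E] {P : Measure E}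

lemma LipschitzWith.integrable_clm_mul_sub (hF : LipschitzWith K F) (hP : MemLp id 2 P)
    (ℓ : E →L[ℝ] ℝ) (x : E) (σ : ℝ) :
    Integrable (fun w => ℓ w * (F (x + σ • w) - F x)) P := by
  refine Integrable.mono' ((hP.integrable_norm_pow two_ne_zero).const_mul (‖ℓ‖ * K * |σ|))
    ?_ (ae_of_all _ fun w => hF.norm_clm_mul_sub_le ℓ x w σ)
  have := hF.continuous
  exact Continuous.aestronglyMeasurable (by fun_prop)

lemma LipschitzWith.integral_clm_mul_map_smul [IsFiniteMeasure P] (hF : LipschitzWith K F)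
    (hP : MemLp id 2 P) (ℓ : E →L[ℝ] ℝ) (hℓ : ∫ w, ℓ w ∂P = 0) (x : E) {σ : ℝ} (hσ : σ ≠ 0) :
    1 / σ ^ 2 * ∫ z, ℓ z * F (x + z) ∂(P.map (σ • ·)) =
      ∫ w, ℓ w * ((F (x + σ • w) - F x) / σ) ∂P := by
  have := hF.continuous
  have hℓint : Integrable ℓ P := ℓ.integrable_comp (hP.integrable one_le_two)
  have hsplit : ∫ w, ℓ w * F (x + σ • w) ∂P = ∫ w, ℓ w * (F (x + σ • w) - F x) ∂P := by
    have := integral_add (hF.integrable_clm_mul_sub hP ℓ x σ) (hℓint.mul_const (F x))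
    simp only [← mul_add, sub_add_cancel] at this
    rw [this, integral_mul_const, hℓ, zero_mul, add_zero]
  rw [integral_map (by fun_prop) (Continuous.aestronglyMeasurable (by fun_prop))]
  simp_rw [map_smul, smul_eq_mul, mul_assoc, mul_div_assoc', div_eq_mul_inv _ σ, mul_comm _ σ⁻¹]
  rw [integral_const_mul, integral_const_mul, hsplit]
  field_simp

lemma LipschitzWith.tendsto_integral_clm_mul_slope (hF : LipschitzWith K F) (hP : MemLp id 2 P)
    (ℓ : E →L[ℝ] ℝ) {x : E} (hx : DifferentiableAt ℝ F x) :
    Tendsto (fun σ => ∫ w, ℓ w * ((F (x + σ • w) - F x) / σ) ∂P) (𝓝[≠] 0)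
      (𝓝 (∫ w, ℓ w * fderiv ℝ F x w ∂P)) := by
  have := hF.continuous
  refine tendsto_integral_filter_of_dominated_convergence (fun w => ‖ℓ‖ * K * ‖w‖ ^ 2)
    (Eventually.of_forall fun σ => Continuous.aestronglyMeasurable (by fun_prop)) ?_
    ((hP.integrable_norm_pow two_ne_zero).const_mul _) (ae_of_all _ fun w => ?_)
  · filter_upwards [self_mem_nhdsWithin] with σ (hσ : σ ≠ 0)
    refine ae_of_all _ fun w => ?_
    have h := hF.norm_clm_mul_sub_le ℓ x w σ
    rw [mul_div_assoc', norm_div, div_le_iff₀ (norm_pos_iff.2 hσ), Real.norm_eq_abs σ]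
    linarith
  · have hline : HasDerivAt (fun t : ℝ => F (x + t • w)) (fderiv ℝ F x w) 0 := by
      have := hx.hasFDerivAt.comp_hasDerivAt_of_eq 0
        (((hasDerivAt_id (0 : ℝ)).smul_const w).const_add x) (by simp)
      simpa [Function.comp_def] using this
    have := (hasDerivAt_iff_tendsto_slope.1 hline).const_mul (ℓ w)
    simpa [slope_def_field] using this

end DifferenceQuotient

section Moments

variable {ι : Type*} [Fintype ι] {μ : Measure ℝ} [IsProbabilityMeasure μ]

lemma integral_comp_eval_pi {f : ℝ → ℝ} (hf : AEStronglyMeasurable f μ) (i : ι) :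
    ∫ w, f (w i) ∂(Measure.pi fun _ => μ) = ∫ y, f y ∂μ := by
  have h := measurePreserving_eval (fun _ => μ) i
  rw [← integral_map h.measurable.aemeasurable (by rwa [h.map_eq]), h.map_eq]

lemma integral_eval_pi (i : ι) :
    ∫ w, w i ∂(Measure.pi fun _ => μ) = ∫ y, y ∂μ :=
  integral_comp_eval_pi aestronglyMeasurable_id i

lemma memLp_eval_pi (hμ : MemLp id 2 μ) (i : ι) :
    MemLp (fun w : ι → ℝ => w i) 2 (Measure.pi fun _ => μ) :=
  hμ.comp_measurePreserving (measurePreserving_eval _ i)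

lemma integral_eval_mul_eval_pi [DecidableEq ι] (hμ : MemLp id 2 μ) (hμ₀ : ∫ y, y ∂μ = 0)
    (i j : ι) :
    ∫ w, w i * w j ∂(Measure.pi fun _ => μ) = if i = j then ∫ y, y ^ 2 ∂μ else 0 := by
  split_ifs with hij
  · subst hij
    simp_rw [← pow_two]
    exact integral_comp_eval_pi (f := (· ^ 2)) (by fun_prop) i
  · have hindep : IndepFun (fun w : ι → ℝ => w i) (fun w => w j) (Measure.pi fun _ => μ) :=
      (iIndepFun_pi (X := fun _ => id) fun _ => aemeasurable_id).indepFun hij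
    rw [← Pi.mul_def, hindep.integral_mul_eq_mul_integral
      (memLp_eval_pi hμ i).aestronglyMeasurable (memLp_eval_pi hμ j).aestronglyMeasurable,
      integral_eval_pi, hμ₀, zero_mul]

lemma integral_eval_mul_clm_pi [DecidableEq ι] (hμ : MemLp id 2 μ) (hμ₀ : ∫ y, y ∂μ = 0)
    (hμ₁ : ∫ y, y ^ 2 ∂μ = 1) (L : (ι → ℝ) →L[ℝ] ℝ) (i : ι) :
    ∫ w, w i * L w ∂(Measure.pi fun _ => μ) = L (Pi.single i 1) := by
  have hL (w : ι → ℝ) : w i * L w = ∑ j, L (Pi.single j 1) * (w i * w j) := by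
    nth_rw 2 [← Finset.univ_sum_single w]
    rw [map_sum, Finset.mul_sum]
    refine Finset.sum_congr rfl fun j _ => ?_
    rw [← mul_one (w j), ← smul_eq_mul (w j), Pi.single_smul', map_smul, smul_eq_mul]
    ring
  have hint (j : ι) : Integrable (fun w : ι → ℝ => w i * w j) (Measure.pi fun _ => μ) :=
    (memLp_eval_pi hμ i).integrable_mul (memLp_eval_pi hμ j)
  simp_rw [hL]
  rw [integral_finsetSum _ fun j _ => (hint j).const_mul _]
  simp [integral_const_mul, integral_eval_mul_eval_pi hμ hμ₀, hμ₁]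

end Moments

section StandardGaussian

variable {ι : Type*} [Fintype ι]

lemma pi_gaussianReal_eq_map_smul (σ : ℝ) :
    Measure.pi (fun _ : ι => gaussianReal 0 (σ ^ 2).toNNReal) =
      (Measure.pi fun _ : ι => gaussianReal 0 1).map (σ • ·) := by
  have h : (gaussianReal 0 1).map (σ * ·) = gaussianReal 0 (σ ^ 2).toNNReal := by
    rw [gaussianReal_map_const_mul, mul_zero, mul_one]
    congr 1
    exact NNReal.eq (by simp [sq_nonneg])
  exact ((measurePreserving_pi _ _ fun _ => ⟨measurable_id.const_mul σ, h⟩).map_eq).symm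

lemma memLp_id_pi_gaussianReal : MemLp id 2 (Measure.pi fun _ : ι => gaussianReal 0 1) :=
  memLp_pi_iff.2 (memLp_eval_pi (memLp_id_gaussianReal 2))

lemma integral_sq_gaussianReal : ∫ y, y ^ 2 ∂gaussianReal 0 1 = 1 := by
  have := variance_of_integral_eq_zero aemeasurable_id (integral_id_gaussianReal (μ := 0) (v := 1))
  simpa [variance_id_gaussianReal] using this.symm

end StandardGaussian

theorem gaussian_slope_tendsto_partial_derivative_general
    (d : ℕ) (F : (Fin d → ℝ) → ℝ)
    (hLip : ∃ K : NNReal, LipschitzWith K F)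
    (x : Fin d → ℝ) (hdiff : DifferentiableAt ℝ F x)
    (i : Fin d) :
    Tendsto
      (fun σ : ℝ =>
        (1 / σ ^ 2) *
          ∫ z, z i * F (x + z)
            ∂(Measure.pi fun _ : Fin d =>
                gaussianReal 0 (Real.toNNReal (σ ^ 2))))
      (𝓝[>] 0) (𝓝 (fderiv ℝ F x (Pi.single i 1))) := by
  obtain ⟨K, hK⟩ := hLip
  set γ := Measure.pi fun _ : Fin d => gaussianReal 0 1
  have hγ : MemLp id 2 γ := memLp_id_pi_gaussianReal
  let ℓ : (Fin d → ℝ) →L[ℝ] ℝ := ContinuousLinearMap.proj i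
  have hmean : ∫ w, ℓ w ∂γ = 0 := (integral_eval_pi i).trans integral_id_gaussianReal
  have hcov : ∫ w, ℓ w * fderiv ℝ F x w ∂γ = fderiv ℝ F x (Pi.single i 1) :=
    integral_eval_mul_clm_pi (memLp_id_gaussianReal 2) integral_id_gaussianReal
      integral_sq_gaussianReal _ i
  have hlim := (hK.tendsto_integral_clm_mul_slope hγ ℓ hdiff).mono_left (nhdsGT_le_nhdsNE 0)
  rw [hcov] at hlim
  refine hlim.congr' ?_
  filter_upwards [self_mem_nhdsWithin] with σ (hσ : 0 < σ)
  rw [pi_gaussianReal_eq_map_smul]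
  exact (hK.integral_clm_mul_map_smul hγ ℓ hmean x hσ.ne').symm

/-- For a Lipschitz function `F : ℝ^d → ℝ` differentiable at `x`, the Gaussian
covariance ratio `(1/σ²)·∫ zᵢ·F(x+z) dμ_σ(z)` — where `μ_σ` is the centered
isotropic Gaussian with covariance `σ²·I` — converges to the partial derivative
`∂F/∂xᵢ(x)` as the bandwidth `σ` tends to `0⁺`. -/
theorem gaussian_slope_tendsto_partial_derivative
    (d : ℕ) (hd : 1 ≤ d) (F : (Fin d → ℝ) → ℝ)
    (hLip : ∃ K : NNReal, LipschitzWith K F)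
    (x : Fin d → ℝ) (hdiff : DifferentiableAt ℝ F x)
    (i : Fin d) :
    Tendsto
      (fun σ : ℝ =>
        (1 / σ ^ 2) *
          ∫ z, z i * F (x + z)
            ∂(Measure.pi fun _ : Fin d =>
                gaussianReal 0 (Real.toNNReal (σ ^ 2))))
      (𝓝[>] 0) (𝓝 (fderiv ℝ F x (Pi.single i 1))) :=
  gaussian_slope_tendsto_partial_derivative_general d F hLip x hdiff i
end
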